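/- arXiv:1808.01569 — 2 statements merged into one kernel-verified Lean document; each statement's English description precedes it below -/
import Mathlib

section
/- In an infinite Fort transformation group (F,G) with ideal I on G, for distinct x,y ∈ F∖{b}: (x,y) ∈ Asym_I(F,G) if and only if for every h ∈ G, st(x)h ∪ st(y)h ∈ I, where st(x) = {g ∈ G : xg = x}. -/
/-!
Two distinct points `u, v` satisfy `(u, v) ∉ α_D` exactly when `u ∈ D` or `v ∈ D`, so
asymptoticity modulo `I` says that the fibres `{g | g • x = z}` and `{g | g • y = z}` lie in `I`
for every `z ≠ b`. A nonempty fibre `{g | g • x = h • x}` is the coset `h • st(x)`, and the fibres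
over the fixed point `b` are empty.
-/

open Pointwise

/-- An ideal on (the carrier of) a group `G`. -/
def IsIdealOn {G : Type*} (I : Set (Set G)) : Prop :=
  I.Nonempty ∧ (∀ A ∈ I, ∀ B : Set G, B ⊆ A → B ∈ I) ∧ ∀ A ∈ I, ∀ B ∈ I, A ∪ B ∈ I

/-- The basic entourage `α_D = ((F∖D) × (F∖D)) ∪ Δ_D` of the Fort uniformity. -/
def fortEntourage (F : Type*) (D : Set F) : Set (F × F) :=
  (Dᶜ ×ˢ Dᶜ) ∪ {p : F × F | p.1 ∈ D ∧ p.1 = p.2}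

/-- Asymptoticity modulo an ideal `I` in a Fort transformation group `(F,G)`, expressed via
the generating entourages `α_D` (finite `D ⊆ F∖{b}`) of the unique uniformity of the Fort
space `F` with particular point `b`. -/
def FortAsymMod (G F : Type*) [SMul G F] (b : F) (I : Set (Set G)) (x y : F) : Prop :=
  ∀ D : Set F, D.Finite → b ∉ D → {g : G | (g • x, g • y) ∉ fortEntourage F D} ∈ I

namespace IsIdealOn

variable {G : Type*} {I : Set (Set G)}

theorem mono (hI : IsIdealOn I) {A B : Set G} (hB : B ∈ I) (hAB : A ⊆ B) : A ∈ I :=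
  hI.2.1 B hB A hAB

theorem empty_mem (hI : IsIdealOn I) : ∅ ∈ I :=
  let ⟨A, hA⟩ := hI.1
  hI.mono hA (Set.empty_subset A)

theorem union_mem_iff (hI : IsIdealOn I) {A B : Set G} : A ∪ B ∈ I ↔ A ∈ I ∧ B ∈ I :=
  ⟨fun h => ⟨hI.mono h Set.subset_union_left, hI.mono h Set.subset_union_right⟩,
    fun h => hI.2.2 A h.1 B h.2⟩

theorem biUnion_mem {ι : Type*} (hI : IsIdealOn I) {s : Set ι} (hs : s.Finite)
    {A : ι → Set G} (hA : ∀ i ∈ s, A i ∈ I) : ⋃ i ∈ s, A i ∈ I := by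
  induction s, hs using Set.Finite.induction_on with
  | empty => simpa using hI.empty_mem
  | @insert i s _ _ ih =>
    rw [Set.biUnion_insert]
    exact hI.union_mem_iff.2
      ⟨hA i (Set.mem_insert i s), ih fun j hj => hA j (Set.mem_insert_of_mem i hj)⟩

end IsIdealOn

theorem notMem_fortEntourage_iff {F : Type*} {D : Set F} {u v : F} (huv : u ≠ v) :
    (u, v) ∉ fortEntourage F D ↔ u ∈ D ∨ v ∈ D := by
  simp only [fortEntourage, Set.mem_union, Set.mem_prod, Set.mem_compl_iff, Set.mem_ofPred_eq,
    huv, and_false, or_false]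
  tauto

section FortTransformationGroup

variable {F G : Type*} [Group G] [MulAction G F]

theorem setOf_smul_eq_smul (x : F) (h : G) :
    {g : G | g • x = h • x} = h • (MulAction.stabilizer G x : Set G) := by
  ext g
  simp only [Set.mem_ofPred_eq, Set.mem_smul_set_iff_inv_smul_mem, SetLike.mem_coe,
    MulAction.mem_stabilizer_iff, smul_eq_mul, mul_smul, inv_smul_eq_iff]

theorem fortAsymMod_iff_forall_fiber_mem {b : F} {I : Set (Set G)} (hI : IsIdealOn I)
    {x y : F} (hxy : x ≠ y) :
    FortAsymMod G F b I x y ↔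
      ∀ z, z ≠ b → {g : G | g • x = z} ∈ I ∧ {g : G | g • y = z} ∈ I := by
  have hne : ∀ g : G, g • x ≠ g • y := fun g => (MulAction.injective g).ne hxy
  simp only [FortAsymMod, notMem_fortEntourage_iff (hne _)]
  constructor
  · intro H z hz
    exact hI.union_mem_iff.1
      (hI.mono (H {z} (Set.finite_singleton z) (Ne.symm hz)) fun _ hg => hg)
  · intro H D hD hbD
    have hbad : {g : G | g • x ∈ D ∨ g • y ∈ D} =
        ⋃ z ∈ D, ({g : G | g • x = z} ∪ {g : G | g • y = z}) := by
      ext g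
      simp only [Set.mem_iUnion, Set.mem_union, Set.mem_ofPred_eq, exists_prop, and_or_left,
        exists_or, exists_eq_right']
    rw [hbad]
    exact hI.biUnion_mem hD fun z hz =>
      hI.union_mem_iff.2 (H z fun hzb => hbD (hzb ▸ hz))

theorem forall_smul_stabilizer_mem_iff {b : F} (hb : ∀ g : G, g • b = b) {I : Set (Set G)}
    (hI : IsIdealOn I) {x : F} (hx : x ≠ b) :
    (∀ h : G, h • (MulAction.stabilizer G x : Set G) ∈ I) ↔
      ∀ z, z ≠ b → {g : G | g • x = z} ∈ I := by
  constructor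
  · intro H z _
    by_cases hz : ∃ h : G, h • x = z
    · obtain ⟨h, rfl⟩ := hz
      rw [setOf_smul_eq_smul]
      exact H h
    · rw [not_exists] at hz
      rw [Set.eq_empty_of_forall_notMem hz]
      exact hI.empty_mem
  · intro H h
    rw [← setOf_smul_eq_smul]
    exact H (h • x) fun hhx => hx (smul_left_cancel h (hhx.trans (hb h).symm))

end FortTransformationGroup

theorem stmt12_general {F G : Type*} [Group G] [MulAction G F] (b : F)
    (hb : ∀ g : G, g • b = b)
    (I : Set (Set G)) (hI : IsIdealOn I)
    (x y : F) (hx : x ≠ b) (hy : y ≠ b) (hxy : x ≠ y) :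
    FortAsymMod G F b I x y ↔
      ∀ h : G, (h • (MulAction.stabilizer G x : Set G)) ∪
        (h • (MulAction.stabilizer G y : Set G)) ∈ I := by
  simp only [fortAsymMod_iff_forall_fiber_mem hI hxy, hI.union_mem_iff, forall_and,
    forall_smul_stabilizer_mem_iff hb hI hx, forall_smul_stabilizer_mem_iff hb hI hy]

/-- In an infinite Fort transformation group `(F,G)` with ideal `I` on `G`, for distinct
`x, y ∈ F∖{b}`: `(x,y)` is asymptotic modulo `I` iff every pair of translated cosets
`st(x)h ∪ st(y)h` of the stabilizers lies in `I`. -/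
theorem stmt12 {F G : Type*} [Group G] [MulAction G F] (b : F) (hF : Infinite F)
    (hb : ∀ g : G, g • b = b)
    (I : Set (Set G)) (hI : IsIdealOn I)
    (x y : F) (hx : x ≠ b) (hy : y ≠ b) (hxy : x ≠ y) :
    FortAsymMod G F b I x y ↔
      ∀ h : G, (h • (MulAction.stabilizer G x : Set G)) ∪
        (h • (MulAction.stabilizer G y : Set G)) ∈ I :=
  stmt12_general b hb I hI x y hx hy hxy
end

section
/- In an infinite Fort transformation group (F,G), (x,y) ∈ Asym(F,G) (i.e., asymptotic modulo the ideal of finite subsets of G) for distinct x,y ∈ F∖{b} if and only if st(x) ∪ st(y) is finite; and (x,b) ∈ Asym(F,G) if and only if st(x) is finite. -/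
open Pointwise

/-! Since `G` acts by bijections fixing `b`, a group element `g` fails to carry `(x, y)` into
`α_D` exactly when `g • x ∈ D` or `g • y ∈ D`. The set of such `g` is a finite union of left
cosets of the stabilizers of `x` and `y`, and for `D = {x}` it contains `st(x)`. -/

lemma fortEntourage_notMem_iff {F : Type*} {D : Set F} {a c : F} (h : a ≠ c) :
    (a, c) ∉ fortEntourage F D ↔ a ∈ D ∨ c ∈ D := by
  simp only [fortEntourage, Set.mem_union, Set.mem_prod, Set.mem_compl_iff, Set.mem_ofPred_eq]
  tauto

lemma setOf_smul_notMem_fortEntourage {G F : Type*} [Group G] [MulAction G F] {x y : F}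
    (hxy : x ≠ y) (D : Set F) :
    {g : G | (g • x, g • y) ∉ fortEntourage F D} = {g | g • x ∈ D} ∪ {g | g • y ∈ D} := by
  ext g
  exact fortEntourage_notMem_iff ((MulAction.injective g).ne hxy)

namespace MulAction

variable {G F : Type*} [Group G] [MulAction G F]

lemma finite_setOf_smul_eq {x : F} (h : (stabilizer G x : Set G).Finite) (d : F) :
    {g : G | g • x = d}.Finite := by
  rcases Set.eq_empty_or_nonempty {g : G | g • x = d} with hempty | ⟨g₀, hg₀⟩
  · exact hempty ▸ Set.finite_empty
  · refine (h.preimage (mul_right_injective g₀⁻¹).injOn).subset fun g hg => ?_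
    rw [Set.mem_preimage, SetLike.mem_coe, mem_stabilizer_iff, mul_smul,
      Set.mem_ofPred_eq.mp hg, ← Set.mem_ofPred_eq.mp hg₀, inv_smul_smul]

lemma finite_setOf_smul_mem {x : F} (h : (stabilizer G x : Set G).Finite) {D : Set F}
    (hD : D.Finite) : {g : G | g • x ∈ D}.Finite :=
  hD.preimage' fun d _ => finite_setOf_smul_eq h d

lemma finite_stabilizer_iff_forall_finite_setOf_smul_mem {x b : F} (hx : x ≠ b) :
    (stabilizer G x : Set G).Finite ↔
      ∀ D : Set F, D.Finite → b ∉ D → {g : G | g • x ∈ D}.Finite := by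
  refine ⟨fun h D hD _ => finite_setOf_smul_mem h hD, fun h => ?_⟩
  exact (h {x} (Set.finite_singleton x) (Set.notMem_singleton_iff.mpr hx.symm)).subset
    fun g hg => by simpa using hg

end MulAction

theorem stmt15_general {F G : Type*} [Group G] [MulAction G F] (b : F)
    (hb : ∀ g : G, g • b = b) :
    (∀ x y : F, x ≠ b → y ≠ b → x ≠ y →
      (FortAsymMod G F b {A : Set G | A.Finite} x y ↔
        ((MulAction.stabilizer G x : Set G) ∪ (MulAction.stabilizer G y : Set G)).Finite)) ∧
    (∀ x : F, x ≠ b →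
      (FortAsymMod G F b {A : Set G | A.Finite} x b ↔
        (MulAction.stabilizer G x : Set G).Finite)) := by
  refine ⟨fun x y hx hy hxy => ?_, fun x hx => ?_⟩
  · simp only [FortAsymMod, setOf_smul_notMem_fortEntourage hxy, Set.mem_ofPred_eq,
      Set.finite_union, MulAction.finite_stabilizer_iff_forall_finite_setOf_smul_mem hx,
      MulAction.finite_stabilizer_iff_forall_finite_setOf_smul_mem hy, forall_and]
  · have hb_out : ∀ D : Set F, b ∉ D → {g : G | g • b ∈ D} = ∅ := fun D hbD =>
      Set.eq_empty_of_forall_notMem fun g hg => hbD (hb g ▸ hg)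
    rw [MulAction.finite_stabilizer_iff_forall_finite_setOf_smul_mem hx]
    refine forall₃_congr fun D _ hbD => ?_
    rw [Set.mem_ofPred_eq, setOf_smul_notMem_fortEntourage hx, hb_out D hbD, Set.union_empty]

/-- In an infinite Fort transformation group `(F,G)`, for asymptoticity modulo the ideal of
finite subsets of `G`: distinct `x,y ∈ F∖{b}` are asymptotic iff `st(x) ∪ st(y)` is finite,
and for `x ∈ F∖{b}`, `(x,b)` is asymptotic iff `st(x)` is finite. -/
theorem stmt15 {F G : Type*} [Group G] [MulAction G F] (b : F) (hF : Infinite F)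
    (hb : ∀ g : G, g • b = b) :
    (∀ x y : F, x ≠ b → y ≠ b → x ≠ y →
      (FortAsymMod G F b {A : Set G | A.Finite} x y ↔
        ((MulAction.stabilizer G x : Set G) ∪ (MulAction.stabilizer G y : Set G)).Finite)) ∧
    (∀ x : F, x ≠ b →
      (FortAsymMod G F b {A : Set G | A.Finite} x b ↔
        (MulAction.stabilizer G x : Set G).Finite)) :=
  stmt15_general b hb
end
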